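/- Let V₀, V₁, …, V_J be d×d complex matrices and Δt > 0. Define F₀ = I + V₀Δt + (1/2)V₀²Δt², F_{1,j} = −i√Δt(V_j + (Δt/2)(V_jV₀ + V₀V_j)) for 1 ≤ j ≤ J, and F_{2,j,k} = −i(√2Δt/2)V_jV_k for 1 ≤ j,k ≤ J. If additionally V₀ = −iH − (1/2)Σ_j V_j†V_j for Hermitian H, then Σ F† F summed over all these Kraus operators equals I + E(Δt) where ‖E(Δt)‖ ≤ C·Δt³ for a constant C depending only on ‖H‖ and Σ_j‖V_j‖². -/

import Mathlib

open Matrix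
open scoped Matrix.Norms.L2Operator

theorem second_order_kraus_approximate_trace_preservation {d J : ℕ}
    (H : Matrix (Fin d) (Fin d) ℂ) (hH : H.IsHermitian)
    (V : Fin J → Matrix (Fin d) (Fin d) ℂ)
    (V₀ : Matrix (Fin d) (Fin d) ℂ)
    (hV₀ : V₀ = (-Complex.I) • H - (1/2 : ℂ) • ∑ j, (V j)ᴴ * V j) :
    ∃ C : ℝ, 0 ≤ C ∧ ∀ Δt : ℝ, 0 < Δt → Δt ≤ 1 →
      ∀ (F₀ : Matrix (Fin d) (Fin d) ℂ)
        (F₁ : Fin J → Matrix (Fin d) (Fin d) ℂ)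
        (F₂ : Fin J → Fin J → Matrix (Fin d) (Fin d) ℂ),
        F₀ = 1 + (Δt : ℂ) • V₀ + ((1/2 : ℂ) * (Δt : ℂ)^2) • (V₀ * V₀) →
        (∀ j, F₁ j = (-Complex.I * (Real.sqrt Δt : ℂ)) •
            (V j + ((Δt : ℂ)/2) • (V j * V₀ + V₀ * V j))) →
        (∀ j k, F₂ j k = (-Complex.I * ((Real.sqrt 2 : ℂ) * (Δt : ℂ) / 2)) • (V j * V k)) →
        ‖F₀ᴴ * F₀ + ∑ j, (F₁ j)ᴴ * F₁ j + ∑ j, ∑ k, (F₂ j k)ᴴ * F₂ j k - 1‖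
          ≤ C * Δt^3 := by
  classical
  set S : Matrix (Fin d) (Fin d) ℂ := ∑ j, (V j)ᴴ * V j with hS
  have hSH : Sᴴ = S := by
    simp [hS, Matrix.conjTranspose_sum, Matrix.conjTranspose_mul]
  -- key Hermitian relation
  have hU : V₀ᴴ = -S - V₀ := by
    rw [hV₀]
    rw [Matrix.conjTranspose_sub, Matrix.conjTranspose_smul, Matrix.conjTranspose_smul,
      hH.eq, hSH]
    simp only [star_neg, Complex.star_def, Complex.conj_I]
    have : ((starRingEnd ℂ) (1/2 : ℂ)) = (1/2 : ℂ) := by norm_num [map_ofNat]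
    rw [this]
    module
  -- auxiliary matrices (independent of Δt)
  set W : Fin J → Matrix (Fin d) (Fin d) ℂ := fun j => V j * V₀ + V₀ * V j with hW
  set T : Matrix (Fin d) (Fin d) ℂ := ∑ j, (V j)ᴴ * (S * V j) with hT
  set Q : Matrix (Fin d) (Fin d) ℂ := ∑ j, (W j)ᴴ * W j with hQ
  set A : Matrix (Fin d) (Fin d) ℂ :=
    (1/2 : ℂ) • (V₀ᴴ * (V₀ * V₀) + V₀ᴴ * (V₀ᴴ * V₀)) + (1/4 : ℂ) • Q with hA
  set B : Matrix (Fin d) (Fin d) ℂ := (1/4 : ℂ) • (V₀ᴴ * (V₀ᴴ * (V₀ * V₀))) with hB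
  refine ⟨‖A‖ + ‖B‖, by positivity, ?_⟩
  intro Δt hΔt hΔt1 F₀ F₁ F₂ hF0 hF1 hF2
  have hc1 : star (-Complex.I * (Real.sqrt Δt : ℂ)) * (-Complex.I * (Real.sqrt Δt : ℂ))
      = (Δt : ℂ) := by
    have hs : ((Real.sqrt Δt : ℝ) : ℂ) * ((Real.sqrt Δt : ℝ) : ℂ) = (Δt : ℂ) := by
      rw [← Complex.ofReal_mul, Real.mul_self_sqrt hΔt.le]
    simp only [Complex.star_def, _root_.map_mul, map_neg, Complex.conj_I, Complex.conj_ofReal]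
    linear_combination hs - ((Real.sqrt Δt : ℝ) : ℂ)^2 * Complex.I_sq
  have hc2 : star (-Complex.I * ((Real.sqrt 2 : ℂ) * (Δt : ℂ) / 2))
      * (-Complex.I * ((Real.sqrt 2 : ℂ) * (Δt : ℂ) / 2)) = (Δt:ℂ)^2/2 := by
    have h2 : ((Real.sqrt 2 : ℝ) : ℂ) * ((Real.sqrt 2 : ℝ) : ℂ) = 2 := by
      rw [← Complex.ofReal_mul, Real.mul_self_sqrt (by norm_num)]; norm_num
    simp only [Complex.star_def, _root_.map_mul, map_neg, map_div₀, Complex.conj_I,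
      Complex.conj_ofReal, map_ofNat]
    linear_combination ((Δt:ℂ)^2/4) * h2
      - ((Δt:ℂ)^2/4 * (((Real.sqrt 2 : ℝ) : ℂ) * ((Real.sqrt 2 : ℝ) : ℂ))) * Complex.I_sq
  have hhalf : star ((Δt : ℂ)/2) = (Δt : ℂ)/2 := by
    simp [Complex.star_def, map_div₀, Complex.conj_ofReal]
  -- closed form of the first-order sum
  have hX : ∀ j, (F₁ j)ᴴ * F₁ j
      = (Δt : ℂ) • ((V j + ((Δt : ℂ)/2) • (V j * V₀ + V₀ * V j))ᴴ
          * (V j + ((Δt : ℂ)/2) • (V j * V₀ + V₀ * V j))) := by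
    intro j
    rw [hF1 j, Matrix.conjTranspose_smul, smul_mul_assoc, mul_smul_comm, smul_smul, hc1]
  have hterm : ∀ j, (F₁ j)ᴴ * F₁ j
      = (Δt:ℂ) • ((V j)ᴴ * V j)
        + ((Δt:ℂ) * ((Δt:ℂ)/2)) • (((V j)ᴴ * V j) * V₀
            + (V₀ᴴ * ((V j)ᴴ * V j) - (V j)ᴴ * (S * V j)))
        + ((Δt:ℂ) * ((Δt:ℂ)^2/4)) • ((W j)ᴴ * W j) := by
    intro j
    rw [hX j]
    simp only [hW, hU, Matrix.conjTranspose_add, Matrix.conjTranspose_smul,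
      Matrix.conjTranspose_mul, hhalf]
    simp only [mul_add, add_mul, smul_add, smul_smul, smul_mul_assoc, mul_smul_comm,
      mul_assoc, sub_eq_add_neg, neg_mul, mul_neg, smul_sub, neg_add, smul_neg, sub_mul]
    module
  have hSum1 : ∑ j, (F₁ j)ᴴ * F₁ j
      = (Δt : ℂ) • (S + ((Δt : ℂ)/2) • (S * V₀ + V₀ᴴ * S - T) + ((Δt:ℂ)^2/4) • Q) := by
    rw [Finset.sum_congr rfl fun j _ => hterm j]
    simp only [Finset.sum_add_distrib, Finset.sum_sub_distrib, ← Finset.smul_sum,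
      ← Finset.sum_mul, ← Finset.mul_sum]
    rw [← hS, ← hT, ← hQ]
    module
  -- closed form of the second-order sum
  have hterm2 : ∀ j k, (F₂ j k)ᴴ * F₂ j k
      = ((Δt:ℂ)^2/2) • ((V k)ᴴ * (((V j)ᴴ * V j) * V k)) := by
    intro j k
    rw [hF2 j k, Matrix.conjTranspose_smul, smul_mul_assoc, mul_smul_comm, smul_smul, hc2,
      Matrix.conjTranspose_mul]
    congr 1
    noncomm_ring
  have hSum2 : ∑ j, ∑ k, (F₂ j k)ᴴ * F₂ j k = ((Δt:ℂ)^2/2) • T := by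
    rw [Finset.sum_congr rfl fun j _ => Finset.sum_congr rfl fun k _ => hterm2 j k,
      Finset.sum_comm, hT, Finset.smul_sum]
    refine Finset.sum_congr rfl fun k _ => ?_
    rw [← Finset.smul_sum, ← Finset.mul_sum, ← Finset.sum_mul, ← hS]
  -- the key algebraic identity
  have key : F₀ᴴ * F₀ + ∑ j, (F₁ j)ᴴ * F₁ j + ∑ j, ∑ k, (F₂ j k)ᴴ * F₂ j k - 1
      = ((Δt:ℂ)^3) • A + ((Δt:ℂ)^4) • B := by
    rw [hSum1, hSum2, hF0]
    rw [Matrix.conjTranspose_add, Matrix.conjTranspose_add, Matrix.conjTranspose_one,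
      Matrix.conjTranspose_smul, Matrix.conjTranspose_smul, Matrix.conjTranspose_mul]
    have h1 : star ((Δt:ℂ)) = (Δt:ℂ) := by simp [Complex.star_def, Complex.conj_ofReal]
    have h2 : star ((1/2 : ℂ) * (Δt:ℂ)^2) = (1/2 : ℂ) * (Δt:ℂ)^2 := by
      simp [Complex.star_def, _root_.map_mul, map_pow, Complex.conj_ofReal, map_ofNat]
    rw [h1, h2, hA, hB, hU]
    simp only [mul_add, add_mul, smul_add, add_smul, smul_smul, smul_mul_assoc,
      mul_smul_comm, mul_assoc, one_mul, mul_one, sub_eq_add_neg, neg_mul, mul_neg,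
      smul_sub, neg_add, smul_neg, neg_neg, neg_sub, sub_mul]
    module
  rw [key]
  have hnorm : ‖((Δt:ℂ)^3) • A + ((Δt:ℂ)^4) • B‖ ≤ Δt^3 * ‖A‖ + Δt^4 * ‖B‖ := by
    refine (norm_add_le _ _).trans ?_
    rw [norm_smul, norm_smul]
    simp [← Complex.ofReal_pow, Complex.norm_of_nonneg (by positivity : (0:ℝ) ≤ Δt^3), Complex.norm_of_nonneg (by positivity : (0:ℝ) ≤ Δt^4), abs_of_pos hΔt]
  refine hnorm.trans ?_
  have h4 : Δt^4 ≤ Δt^3 := by nlinarith [hΔt.le, pow_pos hΔt 3]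
  have hA0 : (0:ℝ) ≤ ‖A‖ := norm_nonneg _
  have hB0 : (0:ℝ) ≤ ‖B‖ := norm_nonneg _
  nlinarith [pow_pos hΔt 3]
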